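/- arXiv:1509.00844 — 5 statements merged into one kernel-verified Lean document; each statement's English description precedes it below -/
import Mathlib

section
/- For all natural numbers N, p, k with 1 ≤ p ≤ N and 1 ≤ k ≤ N - p + 1, the following identity of rational numbers holds: (1/N) · ∑_{l=0}^{p-1} [ C(k+l-1, l) · C(N-k-l, p-1-l) / C(N-1, p-1) ] = 1/(N-p+1). (This is Proposition 4.1 of the paper: it shows that the probability that the p-th lock is opened on the k-th trial in the key-by-key strategy equals the uniform probability 1/(N-p+1).) -/
open Finset

lemma hockey_aux (b : ℕ) : ∀ m, ∑ l ∈ range (m+1), (b+l).choose l = (m+b+1).choose m := by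
  intro m
  induction m with
  | zero => simp
  | succ m ih =>
    rw [Finset.sum_range_succ, ih, show b + (m+1) = m+b+1 from by omega,
      show m+1+b+1 = (m+b+1)+1 from by omega]
    exact (Nat.choose_succ_succ (m+b+1) m).symm

lemma conv_aux (a b : ℕ) : ∀ m, ∑ l ∈ range (m+1), (a+l).choose l * (b + (m-l)).choose (m-l)
    = (m+a+b+1).choose m := by
  induction a with
  | zero =>
    intro m
    simp only [Nat.zero_add, Nat.choose_self, one_mul]
    have hr := Finset.sum_range_reflect (fun l => (b+l).choose l) (m+1)
    simp only [Nat.add_sub_cancel] at hr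
    rw [hr, hockey_aux b m]
    congr 1
  | succ a iha =>
    intro m
    induction m with
    | zero => simp
    | succ m ihm =>
      rw [Finset.sum_range_succ']
      have h1 : ∀ l ∈ range (m+1),
          (a + 1 + (l+1)).choose (l+1) * (b + (m+1-(l+1))).choose (m+1-(l+1))
          = (a + (l+1)).choose (l+1) * (b + (m-l)).choose (m-l)
            + (a + 1 + l).choose l * (b + (m-l)).choose (m-l) := by
        intro l hl
        rw [show m+1-(l+1) = m - l from by omega,
          show a + 1 + (l+1) = (a + (l+1)) + 1 from by omega,
          Nat.choose_succ_succ, Nat.add_mul, show a + (l+1) = a + 1 + l from by omega]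
        exact Nat.add_comm _ _
      rw [Finset.sum_congr rfl h1, Finset.sum_add_distrib, ihm]
      have h2 : ∑ l ∈ range (m+1), (a + (l+1)).choose (l+1) * (b + (m-l)).choose (m-l)
          + (a + 1 + 0).choose 0 * (b + (m + 1 - 0)).choose (m + 1 - 0)
          = ∑ l ∈ range (m+2), (a + l).choose l * (b + (m+1-l)).choose (m+1-l) := by
        rw [Finset.sum_range_succ'
          (fun l => (a + l).choose l * (b + (m+1-l)).choose (m+1-l)) (m+1)]
        congr 1
        · exact Finset.sum_congr rfl fun l hl => by
            rw [mem_range] at hl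
            rw [show m+1-(l+1) = m - l from by omega]
        · simp
      rw [add_right_comm, h2, iha (m+1),
        show m + (a+1) + b + 1 = m + 1 + a + b + 1 from by omega,
        show m + 1 + (a+1) + b + 1 = (m + 1 + a + b + 1) + 1 from by omega,
        Nat.add_comm]
      exact (Nat.choose_succ_succ (m+1+a+b+1) m).symm

/-- Proposition 4.1: the probability that the `p`-th lock is opened at the `k`-th trial in the
key-by-key strategy equals the uniform probability `1/(N-p+1)`. -/
theorem lock_key_uniform_prob (N p k : ℕ) (hp1 : 1 ≤ p) (hpN : p ≤ N)
    (hk1 : 1 ≤ k) (hk : k ≤ N - p + 1) :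
    (1 / (N : ℚ)) * ∑ l ∈ Finset.range p,
      (((k + l - 1).choose l : ℚ) * ((N - k - l).choose (p - 1 - l) : ℚ))
        / ((N - 1).choose (p - 1) : ℚ)
    = 1 / ((N - p + 1 : ℕ) : ℚ) := by
  have hkpN : k + p ≤ N + 1 := by omega
  have hsum : ∑ l ∈ Finset.range p, (k + l - 1).choose l * (N - k - l).choose (p - 1 - l)
      = N.choose (p - 1) := by
    have h := conv_aux (k-1) (N - k - (p-1)) (p-1)
    rw [show p - 1 + (k-1) + (N - k - (p-1)) + 1 = N from by omega] at h
    rw [← h]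
    refine Finset.sum_congr (congrArg range (by omega : p = p - 1 + 1)) fun l hl => ?_
    rw [mem_range] at hl
    rw [show k + l - 1 = k - 1 + l from by omega,
      show N - k - l = N - k - (p-1) + (p - 1 - l) from by omega]
  have hN0 : (N : ℚ) ≠ 0 := Nat.cast_ne_zero.mpr (by omega)
  have hC0 : ((N-1).choose (p-1) : ℚ) ≠ 0 :=
    Nat.cast_ne_zero.mpr (Nat.choose_pos (by omega)).ne'
  have hNp0 : ((N - p + 1 : ℕ) : ℚ) ≠ 0 := Nat.cast_ne_zero.mpr (by omega)
  have hid : (N-1).choose (p-1) * N = N.choose (p-1) * (N-p+1) := by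
    have h := Nat.choose_mul_succ_eq (N-1) (p-1)
    rw [show N-1+1 = N from by omega] at h
    rw [h]
    congr 1
    omega
  rw [← Finset.sum_div]
  have hs : ∑ l ∈ Finset.range p,
      (((k + l - 1).choose l : ℚ) * ((N - k - l).choose (p - 1 - l) : ℚ))
      = (N.choose (p-1) : ℚ) := by
    have h2 : ((∑ l ∈ Finset.range p,
        (k + l - 1).choose l * (N - k - l).choose (p - 1 - l) : ℕ) : ℚ)
        = ((N.choose (p-1) : ℕ) : ℚ) := by exact_mod_cast hsum
    push_cast at h2
    exact h2
  rw [hs, div_mul_div_comm, one_mul, div_eq_div_iff (by exact mul_ne_zero hN0 hC0) hNp0, one_mul]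
  have hfin : N.choose (p-1) * (N-p+1) = N * ((N-1).choose (p-1)) := by
    rw [← hid, Nat.mul_comm]
  exact_mod_cast hfin
end

section
/- Let n, N be natural numbers with 1 ≤ n ≤ N, let (Ω, μ) be a probability space, and let X_1, ..., X_n : Ω → ℕ be mutually independent random variables such that for each i ∈ {1,...,n}, X_i has the geometric distribution on {1,2,...} with success probability 1/(N-i+1), i.e. μ(X_i = 0) = 0 and μ(X_i = k) = ((N-i)/(N-i+1))^{k-1} · (1/(N-i+1)) for all k ≥ 1. Then the total number of trials T = X_1 + ... + X_n satisfies Var(T) = n(3N² - 3Nn + n² - 1)/3. -/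
/-!
The number of trials needed for the `i`-th lock is one plus a `geometricMeasure` variable with
success probability `p = 1 / (N - i)`, whose variance is `(1 - p) / p ^ 2 = (N - i) ^ 2 - (N - i)`;
its second moment comes from `∑ n² rⁿ = r (1 + r) / (1 - r)³`. Independence makes the variances
add up, and `∑_{i < n} ((N - i) ^ 2 - (N - i))` is the closed form.
-/

open MeasureTheory ProbabilityTheory

theorem hasSum_sq_mul_geometric_of_norm_lt_one {𝕜 : Type*} [NormedField 𝕜] [CompleteSpace 𝕜]
    {r : 𝕜} (hr : ‖r‖ < 1) :
    HasSum (fun n : ℕ ↦ (n : 𝕜) ^ 2 * r ^ n) (r * (1 + r) / (1 - r) ^ 3) := by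
  have h2 := (hasSum_choose_mul_geometric_of_norm_lt_one 2 hr).mul_left 2
  have h1 := (hasSum_choose_mul_geometric_of_norm_lt_one 1 hr).mul_left 3
  have h0 := hasSum_choose_mul_geometric_of_norm_lt_one 0 hr
  have hr1 : 1 - r ≠ 0 := sub_ne_zero.2 fun h ↦ by simp [← h] at hr
  have hsum : r * (1 + r) / (1 - r) ^ 3
      = 2 * (1 / (1 - r) ^ (2 + 1)) - 3 * (1 / (1 - r) ^ (1 + 1)) + 1 / (1 - r) ^ (0 + 1) := by
    field_simp
    ring
  rw [hsum]
  -- `n² = 2 (n+2 choose 2) - 3 (n+1 choose 1) + (n choose 0)`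
  refine ((h2.sub h1).add h0).congr_fun fun n ↦ ?_
  have hchoose : (n + 2).choose 2 * 2 = (n + 2) * (n + 1) := by
    simpa using (Nat.add_one_mul_choose_eq (n + 1) 1).symm
  have hchoose' := congrArg (Nat.cast : ℕ → 𝕜) hchoose
  push_cast at hchoose'
  simp only [Nat.choose_one_right, Nat.choose_zero_right]
  push_cast
  linear_combination (-r ^ n) * hchoose'

theorem sum_range_sub_sq_sub_sub (x : ℝ) (n : ℕ) :
    ∑ i ∈ Finset.range n, ((x - i) ^ 2 - (x - i))
      = n * (3 * x ^ 2 - 3 * x * n + n ^ 2 - 1) / 3 := by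
  induction n with
  | zero => simp
  | succ m ih =>
    rw [Finset.sum_range_succ, ih]
    push_cast
    ring

theorem unitInterval.norm_one_sub_lt_one {p : unitInterval} (hp : p ≠ 0) :
    ‖(1 - p : ℝ)‖ < 1 := by
  rw [Real.norm_of_nonneg (unitInterval.one_minus_nonneg p), sub_lt_self_iff]
  exact unitInterval.pos_iff_ne_zero.2 hp

namespace ProbabilityTheory

variable {p : unitInterval}

lemma integral_natCast_geometricMeasure (hp : p ≠ 0) :
    ∫ n, (n : ℝ) ∂geometricMeasure p = (1 - p) / p := by
  have hp' : (p : ℝ) ≠ 0 := unitInterval.coe_ne_zero.2 hp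
  have h := (hasSum_coe_mul_geometric_of_norm_lt_one (unitInterval.norm_one_sub_lt_one hp)).mul_left
    (p : ℝ)
  rw [sub_sub_cancel] at h
  rw [integral_geometricMeasure hp, (h.congr_fun fun n ↦ by rw [smul_eq_mul]; ring).tsum_eq]
  field_simp

lemma integral_natCast_sq_geometricMeasure (hp : p ≠ 0) :
    ∫ n, (n : ℝ) ^ 2 ∂geometricMeasure p = (1 - p) * (2 - p) / p ^ 2 := by
  have hp' : (p : ℝ) ≠ 0 := unitInterval.coe_ne_zero.2 hp
  have h := (hasSum_sq_mul_geometric_of_norm_lt_one (unitInterval.norm_one_sub_lt_one hp)).mul_left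
    (p : ℝ)
  rw [sub_sub_cancel] at h
  rw [integral_geometricMeasure hp, (h.congr_fun fun n ↦ by rw [smul_eq_mul]; ring).tsum_eq]
  field_simp
  ring

lemma memLp_natCast_geometricMeasure (hp : p ≠ 0) :
    MemLp (fun n : ℕ ↦ (n : ℝ)) 2 (geometricMeasure p) := by
  refine (memLp_two_iff_integrable_sq (by fun_prop)).2 ((integrable_geometricMeasure_iff hp).2 ?_)
  refine (((hasSum_sq_mul_geometric_of_norm_lt_one
    (unitInterval.norm_one_sub_lt_one hp)).mul_left (p : ℝ)).congr_fun fun n ↦ ?_).summable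
  rw [Real.norm_of_nonneg (by positivity)]
  ring

lemma variance_natCast_geometricMeasure (hp : p ≠ 0) :
    Var[fun n : ℕ ↦ (n : ℝ); geometricMeasure p] = (1 - p) / p ^ 2 := by
  have hp' : (p : ℝ) ≠ 0 := unitInterval.coe_ne_zero.2 hp
  rw [variance_eq_sub (memLp_natCast_geometricMeasure hp)]
  simp only [Pi.pow_apply]
  rw [integral_natCast_sq_geometricMeasure hp, integral_natCast_geometricMeasure hp]
  field_simp
  ring

variable {Ω : Type*} [MeasurableSpace Ω] {μ : Measure Ω} {X : Ω → ℕ}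

lemma map_eq_map_succ_geometricMeasure (hX : Measurable X) (hp : p ≠ 0)
    (h0 : μ {ω | X ω = 0} = 0)
    (hX_succ : ∀ k, 1 ≤ k → μ {ω | X ω = k} = ENNReal.ofReal ((1 - p) ^ (k - 1) * p)) :
    μ.map X = (geometricMeasure p).map (· + 1) := by
  refine Measure.ext_of_singleton fun k ↦ ?_
  rw [Measure.map_apply hX (measurableSet_singleton k),
    Measure.map_apply (by fun_prop) (measurableSet_singleton k)]
  rcases k with _ | k
  · rw [show (· + 1) ⁻¹' {0} = (∅ : Set ℕ) by ext; simp, measure_empty]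
    exact h0
  · rw [show (· + 1) ⁻¹' {k + 1} = {k} by ext; simp, geometricMeasure_singleton hp]
    exact hX_succ (k + 1) k.succ_pos

lemma memLp_natCast_of_map_eq_map_succ_geometricMeasure (hX : Measurable X) (hp : p ≠ 0)
    (hlaw : μ.map X = (geometricMeasure p).map (· + 1)) :
    MemLp (fun ω ↦ (X ω : ℝ)) 2 μ := by
  have h_succ : MemLp (fun n : ℕ ↦ (n : ℝ) + 1) 2 (geometricMeasure p) :=
    (memLp_natCast_geometricMeasure hp).add (memLp_const 1)
  have h_map : MemLp (fun n : ℕ ↦ (n : ℝ)) 2 (μ.map X) := by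
    rw [hlaw, memLp_map_measure_iff (by fun_prop) (by fun_prop)]
    simpa [Function.comp_def] using h_succ
  exact (memLp_map_measure_iff (by fun_prop) hX.aemeasurable).1 h_map

lemma variance_natCast_of_map_eq_map_succ_geometricMeasure (hX : Measurable X) (hp : p ≠ 0)
    (hlaw : μ.map X = (geometricMeasure p).map (· + 1)) :
    Var[fun ω ↦ (X ω : ℝ); μ] = (1 - p) / p ^ 2 := by
  calc Var[fun ω ↦ (X ω : ℝ); μ]
      = Var[fun n : ℕ ↦ (n : ℝ); μ.map X] := (variance_map (by fun_prop) hX.aemeasurable).symm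
    _ = Var[fun n : ℕ ↦ (n : ℝ) + 1; geometricMeasure p] := by
      rw [hlaw, variance_map (by fun_prop) (by fun_prop)]
      simp [Function.comp_def]
    _ = (1 - p) / p ^ 2 := by
      rw [variance_add_const (by fun_prop), variance_natCast_geometricMeasure hp]

lemma memLp_natCast_and_variance_of_geometric_one_div {a : ℝ} (ha : 1 ≤ a) (hX : Measurable X)
    (h0 : μ {ω | X ω = 0} = 0)
    (hX_succ : ∀ k, 1 ≤ k →
      μ {ω | X ω = k} = ENNReal.ofReal (((a - 1) / a) ^ (k - 1) * (1 / a))) :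
    MemLp (fun ω ↦ (X ω : ℝ)) 2 μ ∧ Var[fun ω ↦ (X ω : ℝ); μ] = a ^ 2 - a := by
  have ha0 : a ≠ 0 := by positivity
  let p : unitInterval := ⟨a⁻¹, inv_nonneg.2 (by positivity), inv_le_one_of_one_le₀ ha⟩
  have hp_val : (p : ℝ) = a⁻¹ := rfl
  have hp : p ≠ 0 := fun h ↦ inv_ne_zero ha0 (congrArg Subtype.val h)
  have hlaw : μ.map X = (geometricMeasure p).map (· + 1) := by
    refine map_eq_map_succ_geometricMeasure hX hp h0 fun k hk ↦ ?_
    rw [hX_succ k hk, hp_val, sub_div, div_self ha0, one_div]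
  refine ⟨memLp_natCast_of_map_eq_map_succ_geometricMeasure hX hp hlaw, ?_⟩
  rw [variance_natCast_of_map_eq_map_succ_geometricMeasure hX hp hlaw, hp_val]
  field_simp

end ProbabilityTheory

theorem totally_random_variance_general
    (n N : ℕ) (hnN : n ≤ N)
    {Ω : Type*} [MeasurableSpace Ω] (μ : Measure Ω)
    (X : Fin n → Ω → ℕ) (hX : ∀ i, Measurable (X i))
    (hindep : iIndepFun X μ)
    (h0 : ∀ i, μ {ω | X i ω = 0} = 0)
    (hgeom : ∀ i : Fin n, ∀ k : ℕ, 1 ≤ k →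
      μ {ω | X i ω = k}
        = ENNReal.ofReal
            ((((N : ℝ) - (i : ℕ) - 1) / ((N : ℝ) - (i : ℕ))) ^ (k - 1)
              * (1 / ((N : ℝ) - (i : ℕ))))) :
    variance (fun ω => ((∑ i, X i ω : ℕ) : ℝ)) μ
      = (n : ℝ) * (3 * (N : ℝ) ^ 2 - 3 * (N : ℝ) * (n : ℝ) + (n : ℝ) ^ 2 - 1) / 3 := by
  have ha (i : Fin n) : 1 ≤ (N : ℝ) - (i : ℕ) := by
    have : (i : ℕ) + 1 ≤ N := i.2.trans_le hnN
    rw [le_sub_iff_add_le']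
    exact_mod_cast this
  have hmom (i : Fin n) :=
    memLp_natCast_and_variance_of_geometric_one_div (ha i) (hX i) (h0 i) (hgeom i)
  have hindep' : iIndepFun (fun i ω ↦ (X i ω : ℝ)) μ :=
    hindep.comp (fun _ ↦ Nat.cast) fun _ ↦ measurable_from_top
  have hsum : (fun ω ↦ ((∑ i, X i ω : ℕ) : ℝ)) = ∑ i, fun ω ↦ (X i ω : ℝ) := by
    ext ω
    simp
  rw [hsum, IndepFun.variance_sum (fun i _ ↦ (hmom i).1)
      fun i _ j _ hij ↦ hindep'.indepFun hij]
  simp_rw [fun i ↦ (hmom i).2]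
  rw [Fin.sum_univ_eq_sum_range (fun i ↦ ((N : ℝ) - i) ^ 2 - ((N : ℝ) - i)) n]
  exact sum_range_sub_sq_sub_sub N n

/-- Totally random strategy: variance of the total number of trials to open `n` locks with
`N ≥ n` keys, assuming mutual independence.  The variable `X i` (for `i : Fin n`, corresponding
to the `(i+1)`-th lock) is geometric on `{1,2,...}` with success probability `1/(N-i)`. -/
theorem totally_random_variance
    (n N : ℕ) (hn : 1 ≤ n) (hnN : n ≤ N)
    {Ω : Type*} [MeasurableSpace Ω] (μ : Measure Ω) [IsProbabilityMeasure μ]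
    (X : Fin n → Ω → ℕ) (hX : ∀ i, Measurable (X i))
    (hindep : iIndepFun X μ)
    (h0 : ∀ i, μ {ω | X i ω = 0} = 0)
    (hgeom : ∀ i : Fin n, ∀ k : ℕ, 1 ≤ k →
      μ {ω | X i ω = k}
        = ENNReal.ofReal
            ((((N : ℝ) - (i : ℕ) - 1) / ((N : ℝ) - (i : ℕ))) ^ (k - 1)
              * (1 / ((N : ℝ) - (i : ℕ))))) :
    variance (fun ω => ((∑ i, X i ω : ℕ) : ℝ)) μ
      = (n : ℝ) * (3 * (N : ℝ) ^ 2 - 3 * (N : ℝ) * (n : ℝ) + (n : ℝ) ^ 2 - 1) / 3 :=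
  totally_random_variance_general n N hnN μ X hX hindep h0 hgeom
end

section
/- Let n ≥ 1 be a natural number, let (Ω, μ) be a probability space, and let X_1, ..., X_n : Ω → ℕ be mutually independent random variables such that for each i ∈ {1,...,n}, X_i has the geometric distribution on {1,2,...} with success probability 1/(n-i+1), i.e. μ(X_i = 0) = 0 and μ(X_i = k) = ((n-i)/(n-i+1))^{k-1} · (1/(n-i+1)) for all k ≥ 1. Then T = X_1 + ... + X_n satisfies E[T] = n(n+1)/2 and Var(T) = n(n-1)(n+1)/3. -/
open MeasureTheory ProbabilityTheory Finset
open scoped ENNReal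

/-!
The waiting times are geometric on `{1, 2, …}`: `X i` has success probability `p = 1 / (n - i)`,
so `E[X i] = 1 / p = n - i` and `Var(X i) = (1 - p) / p² = (n - i)² - (n - i)`. Both moments come
from the series `∑ (k + 1) qᵏ = 1 / (1 - q)²` and `∑ (k + 1)² qᵏ = (1 + q) / (1 - q)³`.
Expectation is additive and, by independence, so is variance; summing over `i` gives
`∑_{m=1}^{n} m = n(n+1)/2` and `∑_{m=1}^{n} (m² - m) = (n-1)n(n+1)/3`.
-/

lemma hasSum_add_one_mul_geometric {q : ℝ} (hq : ‖q‖ < 1) :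
    HasSum (fun k : ℕ => ((k : ℝ) + 1) * q ^ k) (1 / (1 - q) ^ 2) := by
  simpa using hasSum_choose_mul_geometric_of_norm_lt_one 1 hq

lemma hasSum_add_one_sq_mul_geometric {q : ℝ} (hq : ‖q‖ < 1) :
    HasSum (fun k : ℕ => ((k : ℝ) + 1) ^ 2 * q ^ k) ((1 + q) / (1 - q) ^ 3) := by
  have hq1 : 1 - q ≠ 0 := by linarith [(le_abs_self q).trans_lt hq]
  have hterm : ∀ k : ℕ, ((k : ℝ) + 1) ^ 2 * q ^ k
      = 2 * (((k + 2).choose 2 : ℕ) * q ^ k) - ((k : ℝ) + 1) * q ^ k := fun k => by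
    rw [Nat.cast_choose_two]
    push_cast
    ring
  have hsum : (1 + q) / (1 - q) ^ 3 = 2 * (1 / (1 - q) ^ (2 + 1)) - 1 / (1 - q) ^ 2 := by
    field_simp
    ring
  simp_rw [hterm, hsum]
  exact ((hasSum_choose_mul_geometric_of_norm_lt_one 2 hq).mul_left 2).sub
    (hasSum_add_one_mul_geometric hq)

lemma lintegral_comp_eq_tsum {Ω : Type*} [MeasurableSpace Ω] {μ : Measure Ω} {Y : Ω → ℕ}
    (hY : Measurable Y) (g : ℕ → ℝ≥0∞) :
    ∫⁻ ω, g (Y ω) ∂μ = ∑' k, g k * μ {ω | Y ω = k} := by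
  rw [← lintegral_map measurable_from_nat hY, lintegral_countable' g]
  refine tsum_congr fun k => ?_
  rw [Measure.map_apply hY (measurableSet_singleton k)]
  rfl

section Geometric

variable {Ω : Type*} [MeasurableSpace Ω] {μ : Measure Ω} {Y : Ω → ℕ} {p : ℝ}

lemma norm_one_sub_lt_one (hp0 : 0 < p) (hp1 : p ≤ 1) : ‖1 - p‖ < 1 := by
  rw [Real.norm_eq_abs, abs_lt]
  constructor <;> linarith

lemma integrable_and_integral_comp_of_geometric (hY : Measurable Y) (hp0 : 0 ≤ p) (hp1 : p ≤ 1)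
    (hgeom : ∀ k, 1 ≤ k → μ {ω | Y ω = k} = ENNReal.ofReal ((1 - p) ^ (k - 1) * p))
    {c : ℕ → ℝ} (hc0 : c 0 = 0) (hc : ∀ k, 0 ≤ c k) {S : ℝ}
    (hS : HasSum (fun k : ℕ => c (k + 1) * ((1 - p) ^ k * p)) S) :
    Integrable (fun ω => c (Y ω)) μ ∧ ∫ ω, c (Y ω) ∂μ = S := by
  have hterm : ∀ k, 0 ≤ c (k + 1) * ((1 - p) ^ k * p) := fun k =>
    mul_nonneg (hc _) (mul_nonneg (pow_nonneg (by linarith) _) hp0)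
  have hlintegral : ∫⁻ ω, ENNReal.ofReal (c (Y ω)) ∂μ = ENNReal.ofReal S := by
    rw [lintegral_comp_eq_tsum hY fun k => ENNReal.ofReal (c k), tsum_eq_zero_add' ENNReal.summable,
      hc0, ENNReal.ofReal_zero, zero_mul, zero_add, ← hS.tsum_eq,
      ENNReal.ofReal_tsum_of_nonneg hterm hS.summable]
    refine tsum_congr fun k => ?_
    rw [hgeom (k + 1) k.succ_pos, Nat.add_sub_cancel, ENNReal.ofReal_mul (hc _)]
  have hmeas : AEStronglyMeasurable (fun ω => c (Y ω)) μ :=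
    (measurable_from_nat.comp hY).aestronglyMeasurable
  have hnonneg : 0 ≤ᵐ[μ] fun ω => c (Y ω) := Filter.Eventually.of_forall fun ω => hc _
  refine ⟨(lintegral_ofReal_ne_top_iff_integrable hmeas hnonneg).mp ?_, ?_⟩
  · rw [hlintegral]
    exact ENNReal.ofReal_ne_top
  · rw [integral_eq_lintegral_of_nonneg_ae hnonneg hmeas, hlintegral,
      ENNReal.toReal_ofReal (hS.nonneg hterm)]

lemma integral_of_geometric (hY : Measurable Y) (hp0 : 0 < p) (hp1 : p ≤ 1)
    (hgeom : ∀ k, 1 ≤ k → μ {ω | Y ω = k} = ENNReal.ofReal ((1 - p) ^ (k - 1) * p)) :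
    ∫ ω, (Y ω : ℝ) ∂μ = 1 / p := by
  have hq : ‖1 - p‖ < 1 := norm_one_sub_lt_one hp0 hp1
  have hval : 1 / p = 1 / (1 - (1 - p)) ^ 2 * p := by
    rw [sub_sub_cancel]
    field_simp
  have hS : HasSum (fun k : ℕ => ((k + 1 : ℕ) : ℝ) * ((1 - p) ^ k * p)) (1 / p) := by
    simpa only [hval, Nat.cast_succ, mul_assoc] using
      (hasSum_add_one_mul_geometric hq).mul_right p
  exact (integrable_and_integral_comp_of_geometric hY hp0.le hp1 hgeom Nat.cast_zero
    Nat.cast_nonneg hS).2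

lemma memLp_two_and_integral_sq_of_geometric (hY : Measurable Y) (hp0 : 0 < p) (hp1 : p ≤ 1)
    (hgeom : ∀ k, 1 ≤ k → μ {ω | Y ω = k} = ENNReal.ofReal ((1 - p) ^ (k - 1) * p)) :
    MemLp (fun ω => (Y ω : ℝ)) 2 μ ∧ ∫ ω, (Y ω : ℝ) ^ 2 ∂μ = (2 - p) / p ^ 2 := by
  have hq : ‖1 - p‖ < 1 := norm_one_sub_lt_one hp0 hp1
  have hval : (2 - p) / p ^ 2 = (1 + (1 - p)) / (1 - (1 - p)) ^ 3 * p := by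
    rw [sub_sub_cancel]
    field_simp
    ring
  have hS :
      HasSum (fun k : ℕ => ((k + 1 : ℕ) : ℝ) ^ 2 * ((1 - p) ^ k * p)) ((2 - p) / p ^ 2) := by
    simpa only [hval, Nat.cast_succ, mul_assoc] using
      (hasSum_add_one_sq_mul_geometric hq).mul_right p
  obtain ⟨hint, hintegral⟩ := integrable_and_integral_comp_of_geometric hY hp0.le hp1 hgeom
    (c := fun k => (k : ℝ) ^ 2) (by simp) (fun k => by positivity) hS
  exact ⟨(memLp_two_iff_integrable_sq (measurable_from_nat.comp hY).aestronglyMeasurable).2 hint,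
    hintegral⟩

lemma variance_of_geometric [IsProbabilityMeasure μ] (hY : Measurable Y) (hp0 : 0 < p)
    (hp1 : p ≤ 1)
    (hgeom : ∀ k, 1 ≤ k → μ {ω | Y ω = k} = ENNReal.ofReal ((1 - p) ^ (k - 1) * p)) :
    variance (fun ω => (Y ω : ℝ)) μ = (1 - p) / p ^ 2 := by
  obtain ⟨hmem, hsq⟩ := memLp_two_and_integral_sq_of_geometric hY hp0 hp1 hgeom
  rw [variance_eq_sub hmem, Pi.pow_def, hsq, integral_of_geometric hY hp0 hp1 hgeom]
  field_simp
  ring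

lemma moments_of_geometric_one_div [IsProbabilityMeasure μ] {r : ℝ} (hY : Measurable Y)
    (hr : 1 ≤ r)
    (hgeom : ∀ k, 1 ≤ k →
      μ {ω | Y ω = k} = ENNReal.ofReal (((r - 1) / r) ^ (k - 1) * (1 / r))) :
    MemLp (fun ω => (Y ω : ℝ)) 2 μ ∧ ∫ ω, (Y ω : ℝ) ∂μ = r ∧
      variance (fun ω => (Y ω : ℝ)) μ = r ^ 2 - r := by
  have hr0 : 0 < r := by linarith
  have hp0 : 0 < 1 / r := by positivity
  have hp1 : 1 / r ≤ 1 := (div_le_one₀ hr0).mpr hr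
  have hgeom' :
      ∀ k, 1 ≤ k → μ {ω | Y ω = k} = ENNReal.ofReal ((1 - 1 / r) ^ (k - 1) * (1 / r)) :=
    fun k hk => by rw [hgeom k hk, sub_div, div_self hr0.ne']
  refine ⟨(memLp_two_and_integral_sq_of_geometric hY hp0 hp1 hgeom').1, ?_, ?_⟩
  · rw [integral_of_geometric hY hp0 hp1 hgeom', one_div_one_div]
  · rw [variance_of_geometric hY hp0 hp1 hgeom']
    field_simp

end Geometric

lemma Fin.sum_univ_natCast_sub_eq_sum_range (n : ℕ) (f : ℝ → ℝ) :
    ∑ i : Fin n, f ((n : ℝ) - (i : ℕ)) = ∑ k ∈ range n, f ((k : ℝ) + 1) := by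
  induction n with
  | zero => simp
  | succ n ih =>
    rw [Fin.sum_univ_succ, sum_range_succ, ← ih, add_comm]
    simp only [Fin.val_zero, Fin.val_succ, Nat.cast_add, Nat.cast_one, Nat.cast_zero, sub_zero,
      add_sub_add_right_eq_sub]

lemma sum_range_natCast_add_one (n : ℕ) :
    ∑ k ∈ range n, ((k : ℝ) + 1) = (n : ℝ) * (n + 1) / 2 := by
  induction n with
  | zero => simp
  | succ n ih => rw [sum_range_succ, ih]; push_cast; ring

lemma sum_range_natCast_add_one_sq_sub (n : ℕ) :
    ∑ k ∈ range n, (((k : ℝ) + 1) ^ 2 - ((k : ℝ) + 1))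
      = (n : ℝ) * (n - 1) * (n + 1) / 3 := by
  induction n with
  | zero => simp
  | succ n ih => rw [sum_range_succ, ih]; push_cast; ring

theorem totally_random_equal_case_general
    (n : ℕ)
    {Ω : Type*} [MeasurableSpace Ω] (μ : Measure Ω) [IsProbabilityMeasure μ]
    (X : Fin n → Ω → ℕ) (hX : ∀ i, Measurable (X i))
    (hindep : iIndepFun X μ)
    (hgeom : ∀ i : Fin n, ∀ k : ℕ, 1 ≤ k →
      μ {ω | X i ω = k}
        = ENNReal.ofReal
            ((((n : ℝ) - (i : ℕ) - 1) / ((n : ℝ) - (i : ℕ))) ^ (k - 1)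
              * (1 / ((n : ℝ) - (i : ℕ))))) :
    (∫ ω, ((∑ i, X i ω : ℕ) : ℝ) ∂μ) = (n : ℝ) * ((n : ℝ) + 1) / 2 ∧
      variance (fun ω => ((∑ i, X i ω : ℕ) : ℝ)) μ
        = (n : ℝ) * ((n : ℝ) - 1) * ((n : ℝ) + 1) / 3 := by
  have hmoments : ∀ i : Fin n, MemLp (fun ω => (X i ω : ℝ)) 2 μ ∧
      ∫ ω, (X i ω : ℝ) ∂μ = (n : ℝ) - (i : ℕ) ∧
      variance (fun ω => (X i ω : ℝ)) μ
        = ((n : ℝ) - (i : ℕ)) ^ 2 - ((n : ℝ) - (i : ℕ)) := by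
    intro i
    have hi : ((i : ℕ) : ℝ) + 1 ≤ n := by exact_mod_cast i.isLt
    exact moments_of_geometric_one_div (hX i) (by linarith) (hgeom i)
  have hsum : (fun ω => ((∑ i, X i ω : ℕ) : ℝ)) = ∑ i, fun ω => (X i ω : ℝ) := by
    ext ω; simp
  constructor
  · simp only [Nat.cast_sum]
    rw [integral_finsetSum _ fun i _ => (hmoments i).1.integrable one_le_two]
    simp only [fun i => (hmoments i).2.1]
    exact (Fin.sum_univ_natCast_sub_eq_sum_range n id).trans (sum_range_natCast_add_one n)
  · rw [hsum, IndepFun.variance_sum (fun i _ => (hmoments i).1) fun i _ j _ hij =>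
      (hindep.indepFun hij).comp measurable_from_nat measurable_from_nat]
    simp only [fun i => (hmoments i).2.2]
    exact (Fin.sum_univ_natCast_sub_eq_sum_range n fun x => x ^ 2 - x).trans
      (sum_range_natCast_add_one_sq_sub n)

/-- Totally random strategy in the case `N = n`: expectation and variance of the total number of
trials.  The variable `X i` (for `i : Fin n`, corresponding to the `(i+1)`-th lock) is geometric
on `{1,2,...}` with success probability `1/(n-i)`. -/
theorem totally_random_equal_case
    (n : ℕ) (hn : 1 ≤ n)
    {Ω : Type*} [MeasurableSpace Ω] (μ : Measure Ω) [IsProbabilityMeasure μ]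
    (X : Fin n → Ω → ℕ) (hX : ∀ i, Measurable (X i))
    (hindep : iIndepFun X μ)
    (h0 : ∀ i, μ {ω | X i ω = 0} = 0)
    (hgeom : ∀ i : Fin n, ∀ k : ℕ, 1 ≤ k →
      μ {ω | X i ω = k}
        = ENNReal.ofReal
            ((((n : ℝ) - (i : ℕ) - 1) / ((n : ℝ) - (i : ℕ))) ^ (k - 1)
              * (1 / ((n : ℝ) - (i : ℕ))))) :
    (∫ ω, ((∑ i, X i ω : ℕ) : ℝ) ∂μ) = (n : ℝ) * ((n : ℝ) + 1) / 2 ∧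
      variance (fun ω => ((∑ i, X i ω : ℕ) : ℝ)) μ
        = (n : ℝ) * ((n : ℝ) - 1) * ((n : ℝ) + 1) / 3 :=
  totally_random_equal_case_general n μ X hX hindep hgeom
end

section
/- Let n, N be natural numbers with 1 ≤ n ≤ N, let (Ω, μ) be a probability space, and let X_1, ..., X_n : Ω → ℕ be mutually independent random variables such that for each i ∈ {1,...,n}, X_i is uniformly distributed on {1, ..., N-i+1}, i.e. μ(X_i = k) = 1/(N-i+1) for every k ∈ {1,...,N-i+1} and μ(X_i = k) = 0 otherwise. Then the total number of trials T = X_1 + ... + X_n satisfies Var(T) = n(6N² - 6Nn + 6N + 2n² - 3n - 5)/72. -/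
/-!
By independence the variance of `T` is the sum of the variances of the `X_i`. A variable uniform
on `{1, …, m}` has mean `(m + 1) / 2` and second moment `(m + 1)(2m + 1) / 6`, hence variance
`(m² - 1) / 12`; summing this over `m = N, N - 1, …, N - n + 1` gives the closed form.
-/

open MeasureTheory ProbabilityTheory Finset

lemma sum_Icc_natCast (m : ℕ) : ∑ k ∈ Icc 1 m, (k : ℝ) = m * (m + 1) / 2 := by
  induction m with
  | zero => simp
  | succ m ih =>
    rw [sum_Icc_succ_top (by omega), ih]
    push_cast
    ring

lemma sum_Icc_natCast_sq (m : ℕ) :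
    ∑ k ∈ Icc 1 m, (k : ℝ) ^ 2 = m * (m + 1) * (2 * m + 1) / 6 := by
  induction m with
  | zero => simp
  | succ m ih =>
    rw [sum_Icc_succ_top (by omega), ih]
    push_cast
    ring

section UniformOnIcc

variable {Ω : Type*} [MeasurableSpace Ω] {μ : Measure Ω} {X : Ω → ℕ} {m : ℕ}

lemma ae_mem_Icc_of_measure_eq_zero (hX : Measurable X)
    (hzero : ∀ k : ℕ, (k = 0 ∨ m < k) → μ {ω | X ω = k} = 0) :
    ∀ᵐ ω ∂μ, X ω ∈ Icc 1 m := by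
  refine ae_of_ae_map hX.aemeasurable (ae_iff_of_countable.2 fun k hk => ?_)
  rw [Measure.map_apply hX (measurableSet_singleton k)] at hk
  by_contra hk'
  exact hk (hzero k (by rw [mem_Icc] at hk'; omega))

lemma integral_comp_eq_sum_Icc_div [IsFiniteMeasure μ] (hX : Measurable X)
    (hunif : ∀ k : ℕ, 1 ≤ k → k ≤ m → μ {ω | X ω = k} = ENNReal.ofReal (1 / (m : ℝ)))
    (hzero : ∀ k : ℕ, (k = 0 ∨ m < k) → μ {ω | X ω = k} = 0) (g : ℕ → ℝ) :
    ∫ ω, g (X ω) ∂μ = (∑ k ∈ Icc 1 m, g k) / m := by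
  have hsupp : ∀ᵐ k ∂μ.map X, k ∈ (Icc 1 m : Set ℕ) :=
    (ae_map_iff hX.aemeasurable .of_discrete).2
      (ae_mem_Icc_of_measure_eq_zero hX hzero)
  rw [← integral_map hX.aemeasurable measurable_from_top.aestronglyMeasurable,
    ← Measure.restrict_eq_self_of_ae_mem hsupp, setIntegral_finset _ IntegrableOn.finset,
    sum_div]
  refine sum_congr rfl fun k hk => ?_
  rw [mem_Icc] at hk
  rw [measureReal_def, Measure.map_apply hX (measurableSet_singleton k)]
  change (μ {ω | X ω = k}).toReal • g k = g k / m
  rw [hunif k hk.1 hk.2, ENNReal.toReal_ofReal (by positivity), smul_eq_mul]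
  ring

lemma memLp_natCast_of_measure_eq_zero [IsFiniteMeasure μ] (hX : Measurable X)
    (hzero : ∀ k : ℕ, (k = 0 ∨ m < k) → μ {ω | X ω = k} = 0) :
    MemLp (fun ω => (X ω : ℝ)) 2 μ := by
  refine MemLp.of_bound (measurable_from_top.comp hX).aestronglyMeasurable (m : ℝ) ?_
  filter_upwards [ae_mem_Icc_of_measure_eq_zero hX hzero] with ω hω
  rw [Real.norm_natCast, Nat.cast_le]
  exact (mem_Icc.1 hω).2

lemma variance_natCast_of_uniform_Icc [IsProbabilityMeasure μ] (hX : Measurable X) (hm : 1 ≤ m)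
    (hunif : ∀ k : ℕ, 1 ≤ k → k ≤ m → μ {ω | X ω = k} = ENNReal.ofReal (1 / (m : ℝ)))
    (hzero : ∀ k : ℕ, (k = 0 ∨ m < k) → μ {ω | X ω = k} = 0) :
    variance (fun ω => (X ω : ℝ)) μ = ((m : ℝ) ^ 2 - 1) / 12 := by
  have hm₀ : (m : ℝ) ≠ 0 := by positivity
  have hmean : μ[fun ω => (X ω : ℝ)] = ((m : ℝ) + 1) / 2 := by
    rw [integral_comp_eq_sum_Icc_div hX hunif hzero (fun k => (k : ℝ)), sum_Icc_natCast]
    field_simp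
  have hsecond : μ[(fun ω => (X ω : ℝ)) ^ 2] = ((m : ℝ) + 1) * (2 * m + 1) / 6 := by
    rw [Pi.pow_def, integral_comp_eq_sum_Icc_div hX hunif hzero (fun k => (k : ℝ) ^ 2),
      sum_Icc_natCast_sq]
    field_simp
  rw [variance_eq_sub (memLp_natCast_of_measure_eq_zero hX hzero), hmean, hsecond]
  ring

end UniformOnIcc

lemma variance_natCast_sum_of_iIndepFun {Ω ι : Type*} [MeasurableSpace Ω] {μ : Measure Ω}
    [Fintype ι] {X : ι → Ω → ℕ} (hindep : iIndepFun X μ)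
    (hX : ∀ i, MemLp (fun ω => (X i ω : ℝ)) 2 μ) :
    variance (fun ω => ((∑ i, X i ω : ℕ) : ℝ)) μ = ∑ i, variance (fun ω => (X i ω : ℝ)) μ := by
  have hsum : (fun ω => ((∑ i, X i ω : ℕ) : ℝ)) = ∑ i, fun ω => (X i ω : ℝ) := by
    ext ω
    simp
  rw [hsum, IndepFun.variance_sum (fun i _ => hX i) fun i _ j _ hij =>
    (hindep.indepFun hij).comp measurable_from_top measurable_from_top]

lemma sum_range_sq_sub_one_div_twelve (x : ℝ) (n : ℕ) :
    ∑ i ∈ range n, ((x - i) ^ 2 - 1) / 12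
      = n * (6 * x ^ 2 - 6 * x * n + 6 * x + 2 * n ^ 2 - 3 * n - 5) / 72 := by
  induction n with
  | zero => simp
  | succ n ih =>
    rw [sum_range_succ, ih]
    push_cast
    ring

/-- Indices are zero-based: `X i` counts the trials for the `(i+1)`-th lock. -/
theorem lock_by_lock_variance_general
    (n N : ℕ) (hnN : n ≤ N)
    {Ω : Type*} [MeasurableSpace Ω] (μ : Measure Ω) [IsProbabilityMeasure μ]
    (X : Fin n → Ω → ℕ) (hX : ∀ i, Measurable (X i))
    (hindep : iIndepFun X μ)
    (hunif : ∀ i : Fin n, ∀ k : ℕ, 1 ≤ k → k ≤ N - (i : ℕ) →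
      μ {ω | X i ω = k} = ENNReal.ofReal (1 / ((N : ℝ) - (i : ℕ))))
    (hzero : ∀ i : Fin n, ∀ k : ℕ, (k = 0 ∨ N - (i : ℕ) < k) → μ {ω | X i ω = k} = 0) :
    variance (fun ω => ((∑ i, X i ω : ℕ) : ℝ)) μ
      = (n : ℝ) * (6 * (N : ℝ) ^ 2 - 6 * (N : ℝ) * (n : ℝ) + 6 * (N : ℝ)
          + 2 * (n : ℝ) ^ 2 - 3 * (n : ℝ) - 5) / 72 := by
  have hcast : ∀ i : Fin n, ((N - (i : ℕ) : ℕ) : ℝ) = (N : ℝ) - (i : ℕ) := fun i =>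
    Nat.cast_sub (by omega)
  have hvar : ∀ i : Fin n,
      variance (fun ω => (X i ω : ℝ)) μ = (((N : ℝ) - (i : ℕ)) ^ 2 - 1) / 12 := fun i => by
    rw [← hcast]
    exact variance_natCast_of_uniform_Icc (hX i) (by omega) (by simpa [hcast] using hunif i)
      (hzero i)
  rw [variance_natCast_sum_of_iIndepFun hindep
      fun i => memLp_natCast_of_measure_eq_zero (hX i) (hzero i),
    sum_congr rfl fun i _ => hvar i,
    Fin.sum_univ_eq_sum_range (fun i => (((N : ℝ) - i) ^ 2 - 1) / 12),
    sum_range_sq_sub_one_div_twelve]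

/-- Lock-by-lock strategy: variance of the total number of trials to open `n` locks with
`N ≥ n` keys, assuming mutual independence.  The variable `X i` (for `i : Fin n`, corresponding
to the `(i+1)`-th lock) is uniform on `{1, ..., N-i}`. -/
theorem lock_by_lock_variance
    (n N : ℕ) (hn : 1 ≤ n) (hnN : n ≤ N)
    {Ω : Type*} [MeasurableSpace Ω] (μ : Measure Ω) [IsProbabilityMeasure μ]
    (X : Fin n → Ω → ℕ) (hX : ∀ i, Measurable (X i))
    (hindep : iIndepFun X μ)
    (hunif : ∀ i : Fin n, ∀ k : ℕ, 1 ≤ k → k ≤ N - (i : ℕ) →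
      μ {ω | X i ω = k} = ENNReal.ofReal (1 / ((N : ℝ) - (i : ℕ))))
    (hzero : ∀ i : Fin n, ∀ k : ℕ, (k = 0 ∨ N - (i : ℕ) < k) → μ {ω | X i ω = k} = 0) :
    variance (fun ω => ((∑ i, X i ω : ℕ) : ℝ)) μ
      = (n : ℝ) * (6 * (N : ℝ) ^ 2 - 6 * (N : ℝ) * (n : ℝ) + 6 * (N : ℝ)
          + 2 * (n : ℝ) ^ 2 - 3 * (n : ℝ) - 5) / 72 :=
  lock_by_lock_variance_general n N hnN μ X hX hindep hunif hzero
end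

section
/- Let n, N be natural numbers with 1 ≤ n ≤ N and let p : Fin n → Fin N be an injective function (p i is the position in the keyring, among positions 0, ..., N-1, of the unique key that opens lock i, where locks are indexed 0, ..., n-1 by the order in which they are attacked). Define the lock-by-lock trial count S₂(p) = ∑_{i ∈ Fin n} |{ j ∈ Fin N : j ≤ p i and ∀ i' < i, p i' ≠ j }| and the key-by-key trial count S₃(p) = ∑_{i ∈ Fin n} |{ i' ∈ Fin n : i' ≤ i and p i' ≥ p i }| + ∑_{j ∈ Fin N, j ∉ range p} |{ i ∈ Fin n : p i > j }|. Then S₂(p) = S₃(p), i.e. for every initial placement of keys on the keyring, the lock-by-lock strategy and the key-by-key strategy require exactly the same total number of trials. -/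
open Finset

/-- Equivalence of the lock-by-lock and key-by-key strategies: for every placement `p` of the
keys (where `p i` is the keyring position of the unique key opening lock `i`), both strategies
use exactly the same total number of trials. -/
theorem strategies_equivalent (n N : ℕ) (hn : 1 ≤ n) (hnN : n ≤ N)
    (p : Fin n → Fin N) (hp : Function.Injective p) :
    -- lock-by-lock trial count S₂(p)
    (∑ i : Fin n,
        (Finset.univ.filter (fun j : Fin N => j ≤ p i ∧ ∀ i' : Fin n, i' < i → p i' ≠ j)).card)
    =
    -- key-by-key trial count S₃(p)
    (∑ i : Fin n,
        (Finset.univ.filter (fun i' : Fin n => i' ≤ i ∧ p i ≤ p i')).card)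
      + ∑ j ∈ Finset.univ.filter (fun j : Fin N => j ∉ Set.range p),
          (Finset.univ.filter (fun i : Fin n => j < p i)).card := by
  have hsplit : ∀ i : Fin n,
      (Finset.univ.filter (fun j : Fin N => j ≤ p i ∧ ∀ i' : Fin n, i' < i → p i' ≠ j)).card
      = (Finset.univ.filter (fun i' : Fin n => i ≤ i' ∧ p i' ≤ p i)).card
        + (Finset.univ.filter (fun j : Fin N => j ∉ Set.range p ∧ j < p i)).card := by
    intro i
    set P := fun j : Fin N => j ≤ p i ∧ ∀ i' : Fin n, i' < i → p i' ≠ j with hP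
    have hdecomp := Finset.card_filter_add_card_filter_not
      (s := Finset.univ.filter P) (p := fun j => j ∈ Set.range p)
    rw [Finset.filter_filter, Finset.filter_filter] at hdecomp
    rw [← hdecomp]
    congr 1
    · -- keys in the range
      symm
      apply Finset.card_bij (fun i' _ => p i')
      · intro i' hi'
        simp only [Finset.mem_filter, Finset.mem_univ, true_and] at hi' ⊢
        refine ⟨⟨hi'.2, fun i'' hi'' => ?_⟩, ⟨i', rfl⟩⟩
        intro h
        have := hp h
        subst this
        exact absurd (lt_of_lt_of_le hi'' hi'.1) (lt_irrefl i'')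
      · intro a _ b _ hab
        exact hp hab
      · intro j hj
        simp only [Finset.mem_filter, Finset.mem_univ, true_and] at hj
        obtain ⟨⟨hle, hne⟩, ⟨i', rfl⟩⟩ := hj
        refine ⟨i', ?_, rfl⟩
        simp only [Finset.mem_filter, Finset.mem_univ, true_and]
        refine ⟨?_, hle⟩
        by_contra h
        exact hne i' (lt_of_not_ge h) rfl
    · -- keys not in the range
      congr 1
      apply Finset.filter_congr
      intro j _
      simp only [hP]
      constructor
      · rintro ⟨⟨hle, _⟩, hnr⟩
        refine ⟨hnr, lt_of_le_of_ne hle fun h => hnr ⟨i, h.symm⟩⟩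
      · rintro ⟨hnr, hlt⟩
        exact ⟨⟨le_of_lt hlt, fun i' _ h => hnr ⟨i', h⟩⟩, hnr⟩
  rw [Finset.sum_congr rfl (fun i _ => hsplit i), Finset.sum_add_distrib]
  congr 1
  · -- first sums: swap the order of summation
    simp only [Finset.card_filter]
    rw [Finset.sum_comm]
  · -- second sums
    simp only [Finset.card_filter]
    rw [Finset.sum_comm]
    rw [Finset.sum_filter]
    apply Finset.sum_congr rfl
    intro j _
    by_cases h : j ∈ Set.range p <;> simp [h]
end
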